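/- arXiv:2306.12361 — 3 statements merged into one kernel-verified Lean document; each statement's English description precedes it below -/
import Mathlib

section
/- (Stochastic Stability Lemma, time-varying version) Suppose ζ_t is a stochastic process and V_t are functions with υ_0, υ_t, μ_t > 0 and 0 < σ_t ≤ 1 such that V_0(ζ_0) ≤ υ_0‖ζ_0‖², υ_t‖ζ_t‖² ≤ V_t(ζ_t), and E[V_{t+1}(ζ_{t+1}) | ζ_t] − V_t(ζ_t) ≤ −σ_t V_t(ζ_t) + μ_t for all t. Then E[‖ζ_t‖²] ≤ (υ_0/υ_t) E[‖ζ_0‖²] ∏_{i=0}^{t-1}(1−σ_i) + (1/υ_t) Σ_{i=0}^{t-1} [ μ_i ∏_{j=i+1}^{t-1}(1−σ_j) ]. -/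
open MeasureTheory

/-- Time-varying stochastic stability lemma: if `V_0(ζ_0) ≤ υ_0 ‖ζ_0‖²`,
`υ_t ‖ζ_t‖² ≤ V_t(ζ_t)`, and
`E[V_{t+1}(ζ_{t+1}) | ζ_t] - V_t(ζ_t) ≤ -σ_t V_t(ζ_t) + μ_t` for all `t`
(with `0 < σ_t ≤ 1`, `υ_t, μ_t > 0`), then `ζ_t` satisfies the exponential
mean-square bound
`E[‖ζ_t‖²] ≤ (υ_0/υ_t) E[‖ζ_0‖²] ∏_{i<t}(1-σ_i)
  + (1/υ_t) Σ_{i<t} μ_i ∏_{j=i+1}^{t-1}(1-σ_j)`. -/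
theorem stochastic_stability_lemma
    {Ω : Type*} [MeasurableSpace Ω] (P : Measure Ω) [IsProbabilityMeasure P]
    (n : ℕ) (ζ : ℕ → Ω → EuclideanSpace ℝ (Fin n))
    (V : ℕ → EuclideanSpace ℝ (Fin n) → ℝ)
    (υ0 : ℝ) (υ σ c : ℕ → ℝ)
    (hυ0 : 0 < υ0) (hυ : ∀ t, 0 < υ t) (hc : ∀ t, 0 < c t)
    (hσ : ∀ t, 0 < σ t ∧ σ t ≤ 1)
    (hζmeas : ∀ t, Measurable (ζ t))
    (hVmeas : ∀ t, Measurable (V t))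
    (hVint : ∀ t, Integrable (fun ω => V t (ζ t ω)) P)
    (hnint : ∀ t, Integrable (fun ω => ‖ζ t ω‖ ^ 2) P)
    (hV0 : ∀ᵐ ω ∂P, V 0 (ζ 0 ω) ≤ υ0 * ‖ζ 0 ω‖ ^ 2)
    (hVlb : ∀ t, ∀ᵐ ω ∂P, υ t * ‖ζ t ω‖ ^ 2 ≤ V t (ζ t ω))
    (hcond : ∀ t,
      P[(fun ω => V (t + 1) (ζ (t + 1) ω)) |
          MeasurableSpace.comap (ζ t) inferInstance]
        ≤ᵐ[P] fun ω => (1 - σ t) * V t (ζ t ω) + c t) :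
    ∀ t, (∫ ω, ‖ζ t ω‖ ^ 2 ∂P)
      ≤ (υ0 / υ t) * (∫ ω, ‖ζ 0 ω‖ ^ 2 ∂P) * ∏ i ∈ Finset.range t, (1 - σ i)
        + (1 / υ t) * ∑ i ∈ Finset.range t,
            c i * ∏ j ∈ Finset.Ico (i + 1) t, (1 - σ j) := by

  have key : ∀ t, (∫ ω, V t (ζ t ω) ∂P)
      ≤ υ0 * (∫ ω, ‖ζ 0 ω‖ ^ 2 ∂P) * ∏ i ∈ Finset.range t, (1 - σ i)
        + ∑ i ∈ Finset.range t, c i * ∏ j ∈ Finset.Ico (i + 1) t, (1 - σ j) := by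
    intro t
    induction t with
    | zero =>
        have h := integral_mono_ae (hVint 0) ((hnint 0).const_mul υ0) hV0
        simpa [integral_const_mul] using h
    | succ t ih =>
        have hm : MeasurableSpace.comap (ζ t) inferInstance ≤ _ := (hζmeas t).comap_le
        have hconst : Integrable (fun _ : Ω => c t) P := integrable_const _
        have hmul : Integrable (fun ω => (1 - σ t) * V t (ζ t ω)) P := (hVint t).const_mul _
        have h1 : (∫ ω, V (t + 1) (ζ (t + 1) ω) ∂P)
            ≤ (1 - σ t) * (∫ ω, V t (ζ t ω) ∂P) + c t := by
          calc (∫ ω, V (t + 1) (ζ (t + 1) ω) ∂P)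
              = ∫ ω, (P[(fun ω => V (t + 1) (ζ (t + 1) ω)) |
                  MeasurableSpace.comap (ζ t) inferInstance]) ω ∂P :=
                (integral_condExp hm).symm
            _ ≤ ∫ ω, ((1 - σ t) * V t (ζ t ω) + c t) ∂P :=
                integral_mono_ae integrable_condExp (hmul.add hconst) (hcond t)
            _ = (1 - σ t) * (∫ ω, V t (ζ t ω) ∂P) + c t := by
                rw [integral_add hmul hconst, integral_const_mul, integral_const]
                simp
        have hσt := hσ t
        have h1σ : (0:ℝ) ≤ 1 - σ t := by linarith [hσt.2]
        have h2 := mul_le_mul_of_nonneg_left ih h1σ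
        have hsum : ∑ i ∈ Finset.range (t + 1), c i * ∏ j ∈ Finset.Ico (i + 1) (t + 1), (1 - σ j)
            = (1 - σ t) * ∑ i ∈ Finset.range t, c i * ∏ j ∈ Finset.Ico (i + 1) t, (1 - σ j) + c t := by
          rw [Finset.sum_range_succ, Finset.mul_sum]
          have : ∀ i ∈ Finset.range t,
              c i * ∏ j ∈ Finset.Ico (i + 1) (t + 1), (1 - σ j)
                = (1 - σ t) * (c i * ∏ j ∈ Finset.Ico (i + 1) t, (1 - σ j)) := by
            intro i hi
            rw [Finset.prod_Ico_succ_top (Finset.mem_range.mp hi)]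
            ring
          rw [Finset.sum_congr rfl this]
          simp
        rw [Finset.prod_range_succ, hsum]
        calc (∫ ω, V (t + 1) (ζ (t + 1) ω) ∂P)
            ≤ (1 - σ t) * (∫ ω, V t (ζ t ω) ∂P) + c t := h1
          _ ≤ (1 - σ t) * (υ0 * (∫ ω, ‖ζ 0 ω‖ ^ 2 ∂P) * ∏ i ∈ Finset.range t, (1 - σ i)
                + ∑ i ∈ Finset.range t, c i * ∏ j ∈ Finset.Ico (i + 1) t, (1 - σ j)) + c t := by
              linarith
          _ = υ0 * (∫ ω, ‖ζ 0 ω‖ ^ 2 ∂P) * ((∏ i ∈ Finset.range t, (1 - σ i)) * (1 - σ t))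
                + ((1 - σ t) * ∑ i ∈ Finset.range t, c i * ∏ j ∈ Finset.Ico (i + 1) t, (1 - σ j) + c t) := by
              ring
  intro t
  have hlb : υ t * (∫ ω, ‖ζ t ω‖ ^ 2 ∂P) ≤ ∫ ω, V t (ζ t ω) ∂P := by
    have := integral_mono_ae ((hnint t).const_mul (υ t)) (hVint t) (hVlb t)
    rwa [integral_const_mul] at this
  have hfin := le_trans hlb (key t)
  have hgoal : (υ0 / υ t) * (∫ ω, ‖ζ 0 ω‖ ^ 2 ∂P) * ∏ i ∈ Finset.range t, (1 - σ i)
        + (1 / υ t) * ∑ i ∈ Finset.range t, c i * ∏ j ∈ Finset.Ico (i + 1) t, (1 - σ j)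
      = (υ0 * (∫ ω, ‖ζ 0 ω‖ ^ 2 ∂P) * ∏ i ∈ Finset.range t, (1 - σ i)
        + ∑ i ∈ Finset.range t, c i * ∏ j ∈ Finset.Ico (i + 1) t, (1 - σ j)) / υ t := by
    field_simp
  rw [hgoal, le_div_iff₀ (hυ t)]
  linarith
end

section
/- Let Π = P^{-1}, K = P H^T R^{-1}, L = I − K H. Then L^T Π L = Π − 2 H^T R^{-1} H + H^T K^T Π K H, and consequently under the bounds p I ≤ P ≤ p̄ I, ‖H‖ ≤ h̄, r I ≤ R, one has L^T Π L ≤ (1/p + 2h̄²/r + p̄h̄⁴/r²)·I. -/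
/-!
Since `Π K = Hᵀ R⁻¹` and `Kᵀ Π = R⁻¹ H`, expanding `(I - K H)ᵀ Π (I - K H)` gives the identity,
whose last term is `M P M` with `M = Hᵀ R⁻¹ H`. For the bound, `Π ≤ p⁻¹ I` and `M ≤ (h̄²/r) I` by
spectral arguments, so `M P M ≤ p̄ M² ≤ p̄ (h̄²/r)² I`, while `-2M ≤ 2M ≤ 2 (h̄²/r) I`.
-/

/-- Euclidean operator norm of a (possibly rectangular) real matrix. -/
noncomputable def opNorm {m n : ℕ} (A : Matrix (Fin m) (Fin n) ℝ) : ℝ :=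
  ‖(Matrix.toEuclideanLin A).toContinuousLinearMap‖

open Matrix
open scoped MatrixOrder ComplexOrder

namespace Matrix

variable {n m 𝕜 : Type*} [RCLike 𝕜]

theorem transpose_one_sub_mul_mul_one_sub_mul {α : Type*} [Fintype n] [Fintype m]
    [DecidableEq n] [CommRing α] {Pi : Matrix n n α} {K : Matrix n m α} {H : Matrix m n α}
    {S : Matrix m m α} (hPiK : Pi * K = Hᵀ * S) (hKPi : Kᵀ * Pi = S * H) :
    (1 - K * H)ᵀ * Pi * (1 - K * H)
      = Pi - (2 : α) • (Hᵀ * S * H) + Hᵀ * Kᵀ * Pi * K * H := by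
  calc (1 - K * H)ᵀ * Pi * (1 - K * H)
      = Pi - Pi * K * H - Hᵀ * (Kᵀ * Pi) + Hᵀ * Kᵀ * Pi * K * H := by
        simp only [transpose_sub, transpose_one, transpose_mul, Matrix.sub_mul, Matrix.mul_sub,
          Matrix.one_mul, Matrix.mul_one, Matrix.mul_assoc]
        abel
    _ = Pi - (2 : α) • (Hᵀ * S * H) + Hᵀ * Kᵀ * Pi * K * H := by
        rw [hPiK, hKPi, two_smul, Matrix.mul_assoc Hᵀ S H]
        abel

theorem transpose_mul_mul_inv_mul_inv {α : Type*} [Fintype n] [Fintype m] [DecidableEq n]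
    [DecidableEq m] [CommRing α] {P : Matrix n n α} {R : Matrix m m α} (hP : P.IsSymm)
    (hR : R.IsSymm) (hPdet : IsUnit P.det) (H : Matrix m n α) :
    (P * Hᵀ * R⁻¹)ᵀ * P⁻¹ = R⁻¹ * H := by
  rw [transpose_mul, transpose_mul, hP.eq, transpose_nonsing_inv, hR.eq, transpose_transpose,
    Matrix.mul_assoc, Matrix.mul_assoc H, mul_nonsing_inv _ hPdet, Matrix.mul_one]

theorem conjTranspose_mul_mul_le_conjTranspose_mul_mul [Fintype m] [Fintype n]
    {A B : Matrix m m 𝕜} (hAB : A ≤ B) (X : Matrix m n 𝕜) : Xᴴ * A * X ≤ Xᴴ * B * X := by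
  rw [le_iff] at hAB ⊢
  simpa only [Matrix.mul_sub, Matrix.sub_mul] using hAB.conjTranspose_mul_mul_same X

theorem le_of_smul_one_le_smul_one [DecidableEq n] [Nonempty n] {a b : ℝ}
    (h : a • (1 : Matrix n n 𝕜) ≤ b • 1) : a ≤ b := by
  simpa [← RCLike.ofReal_sub] using (le_iff.1 h).diag_nonneg (i := Classical.arbitrary n)

theorem inv_le_inv_smul_one_of_smul_one_le [Fintype n] [DecidableEq n] {P : Matrix n n 𝕜} {p : ℝ}
    (hp : 0 < p) (h : p • 1 ≤ P) : P⁻¹ ≤ p⁻¹ • 1 := by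
  have hsa : IsSelfAdjoint P := .of_nonneg ((smul_nonneg hp.le zero_le_one).trans h)
  rw [← Algebra.algebraMap_eq_smul_one] at h ⊢
  rw [algebraMap_le_iff_le_spectrum] at h
  have hpos : ∀ x ∈ spectrum ℝ P, 0 < x := fun x hx => hp.trans_le (h x hx)
  have hunit : IsUnit P := spectrum.isUnit_of_zero_notMem ℝ fun h0 => (hpos 0 h0).false
  rw [nonsing_inv_eq_ringInverse, ← cfc_ringInverse_id (R := ℝ) (a := P) hunit,
    cfc_le_algebraMap_iff _ _ _ (continuousOn_inv₀.mono fun x hx => (hpos x hx).ne')]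
  exact fun x hx => inv_anti₀ hp (h x hx)

theorem mul_self_le_smul_one_of_le_smul_one [Fintype n] [DecidableEq n] {M : Matrix n n 𝕜}
    {c : ℝ} (hM : 0 ≤ M) (hMc : M ≤ c • 1) : M * M ≤ (c ^ 2) • 1 := by
  rw [← Algebra.algebraMap_eq_smul_one] at hMc ⊢
  rw [le_algebraMap_iff_spectrum_le] at hMc
  rw [← pow_two, ← cfc_pow_id (R := ℝ) M 2, cfc_le_algebraMap_iff (· ^ 2) (c ^ 2) M]
  intro x hx
  nlinarith [hMc x hx, spectrum_nonneg_of_nonneg hM hx]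

theorem sub_two_smul_add_mul_mul_le [Fintype n] [DecidableEq n] {Pi M P : Matrix n n 𝕜}
    {a b c : ℝ} (hPi : Pi ≤ a • 1) (hM : 0 ≤ M) (hMc : M ≤ c • 1) (hP : P ≤ b • 1) (hb : 0 ≤ b) :
    Pi - (2 : ℝ) • M + M * P * M ≤ (a + 2 * c + b * c ^ 2) • 1 := by
  have hMPM : M * P * M ≤ (b * c ^ 2) • 1 := calc
    M * P * M ≤ M * (b • 1) * M := hM.isSelfAdjoint.conjugate_le_conjugate hP
    _ = b • (M * M) := by simp
    _ ≤ b • (c ^ 2 • 1) :=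
      smul_le_smul_of_nonneg_left (mul_self_le_smul_one_of_le_smul_one hM hMc) hb
    _ = (b * c ^ 2) • 1 := smul_smul _ _ _
  have hM2 : -((2 : ℝ) • M) ≤ (2 * c) • 1 := calc
    -((2 : ℝ) • M) ≤ (2 : ℝ) • M := neg_le_self (smul_nonneg zero_le_two hM)
    _ ≤ (2 : ℝ) • (c • 1) := smul_le_smul_of_nonneg_left hMc zero_le_two
    _ = (2 * c) • 1 := smul_smul _ _ _
  calc Pi - (2 : ℝ) • M + M * P * M ≤ a • 1 + (2 * c) • 1 + (b * c ^ 2) • 1 := by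
        rw [sub_eq_add_neg]
        gcongr
    _ = (a + 2 * c + b * c ^ 2) • 1 := by rw [add_smul, add_smul]

end Matrix

theorem transpose_mul_self_le_of_opNorm_le {m n : ℕ} {H : Matrix (Fin m) (Fin n) ℝ} {h : ℝ}
    (hH : opNorm H ≤ h) : Hᵀ * H ≤ (h ^ 2) • 1 := by
  have hh : 0 ≤ h := (norm_nonneg _).trans hH
  rw [le_iff]
  refine .of_dotProduct_mulVec_nonneg ?_ fun x => ?_
  · simpa using (isHermitian_one.smul (IsSelfAdjoint.all (h ^ 2))).sub
      (isHermitian_conjTranspose_mul_self H)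
  set v := WithLp.toLp 2 x
  have hv : ‖toEuclideanLin H v‖ ≤ h * ‖v‖ :=
    ((toEuclideanLin H).toContinuousLinearMap.le_opNorm v).trans
      (mul_le_mul_of_nonneg_right hH (norm_nonneg v))
  have hx : x ⬝ᵥ x = ‖v‖ ^ 2 := by
    rw [← real_inner_self_eq_norm_sq, EuclideanSpace.inner_eq_star_dotProduct]
    simp [v]
  have hHx : (H *ᵥ x) ⬝ᵥ (H *ᵥ x) = ‖toEuclideanLin H v‖ ^ 2 := by
    rw [← real_inner_self_eq_norm_sq, EuclideanSpace.inner_eq_star_dotProduct]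
    simp [v]
  have hquad : star x ⬝ᵥ ((h ^ 2) • 1 - Hᵀ * H) *ᵥ x
      = h ^ 2 * (x ⬝ᵥ x) - (H *ᵥ x) ⬝ᵥ (H *ᵥ x) := by
    simp [sub_mulVec, smul_mulVec, ← mulVec_mulVec, dotProduct_mulVec, vecMul_transpose]
  rw [hquad, hx, hHx]
  nlinarith [norm_nonneg (toEuclideanLin H v)]

theorem transpose_mul_inv_mul_le_of_opNorm_le {m n : ℕ} {H : Matrix (Fin m) (Fin n) ℝ}
    {R : Matrix (Fin m) (Fin m) ℝ} {h r : ℝ} (hH : opNorm H ≤ h) (hr : 0 < r) (hR : r • 1 ≤ R) :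
    Hᵀ * R⁻¹ * H ≤ (h ^ 2 / r) • 1 := calc
  Hᵀ * R⁻¹ * H ≤ r⁻¹ • (Hᵀ * H) := by
    simpa using conjTranspose_mul_mul_le_conjTranspose_mul_mul
      (inv_le_inv_smul_one_of_smul_one_le hr hR) H
  _ ≤ r⁻¹ • ((h ^ 2) • 1) :=
    smul_le_smul_of_nonneg_left (transpose_mul_self_le_of_opNorm_le hH) (by positivity)
  _ = (h ^ 2 / r) • 1 := by rw [smul_smul, inv_mul_eq_div]

/-- With `Π = P⁻¹`, `K = P Hᵀ R⁻¹`, `L = I - K H`: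
`Lᵀ Π L = Π - 2 Hᵀ R⁻¹ H + Hᵀ Kᵀ Π K H`, and under the bounds
`p I ≤ P ≤ p̄ I`, `‖H‖ ≤ h̄`, `r I ≤ R`, one has
`Lᵀ Π L ≤ (1/p + 2 h̄²/r + p̄ h̄⁴/r²) I`. -/
theorem kalman_LPL_identity_and_bound
    (n m : ℕ) (P : Matrix (Fin n) (Fin n) ℝ) (H : Matrix (Fin m) (Fin n) ℝ)
    (R : Matrix (Fin m) (Fin m) ℝ) (p pbar hbar r : ℝ)
    (hp : 0 < p) (hr : 0 < r)
    (hP : P.PosDef)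
    (hPlb : (P - p • (1 : Matrix (Fin n) (Fin n) ℝ)).PosSemidef)
    (hPub : (pbar • (1 : Matrix (Fin n) (Fin n) ℝ) - P).PosSemidef)
    (hH : opNorm H ≤ hbar)
    (hR : R.PosDef)
    (hRlb : (R - r • (1 : Matrix (Fin m) (Fin m) ℝ)).PosSemidef)
    (Pi : Matrix (Fin n) (Fin n) ℝ) (hPi : Pi = P⁻¹)
    (K : Matrix (Fin n) (Fin m) ℝ) (hK : K = P * H.transpose * R⁻¹)
    (L : Matrix (Fin n) (Fin n) ℝ) (hL : L = 1 - K * H) :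
    L.transpose * Pi * L
        = Pi - (2 : ℝ) • (H.transpose * R⁻¹ * H)
          + H.transpose * K.transpose * Pi * K * H
      ∧ ((1 / p + 2 * hbar ^ 2 / r + pbar * hbar ^ 4 / r ^ 2) •
            (1 : Matrix (Fin n) (Fin n) ℝ)
          - L.transpose * Pi * L).PosSemidef := by
  have hPdet : IsUnit P.det := hP.det_pos.ne'.isUnit
  have hPiK : Pi * K = Hᵀ * R⁻¹ := by
    rw [hPi, hK, Matrix.mul_assoc, nonsing_inv_mul_cancel_left _ _ hPdet]
  have hKPi : Kᵀ * Pi = R⁻¹ * H := hK ▸ hPi ▸ transpose_mul_mul_inv_mul_inv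
    (isHermitian_iff_isSymm.1 hP.isHermitian) (isHermitian_iff_isSymm.1 hR.isHermitian) hPdet H
  have hid := transpose_one_sub_mul_mul_one_sub_mul hPiK hKPi
  refine ⟨hL ▸ hid, ?_⟩
  have hMPM : Hᵀ * Kᵀ * Pi * K * H = (Hᵀ * R⁻¹ * H) * P * (Hᵀ * R⁻¹ * H) := by
    rw [Matrix.mul_assoc Hᵀ Kᵀ Pi, hKPi, hK]
    simp only [Matrix.mul_assoc]
  rw [← le_iff]
  rcases isEmpty_or_nonempty (Fin n) with hn | hn
  · exact (Subsingleton.elim _ _).le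
  have hpbar : 0 ≤ pbar := hp.le.trans (le_of_smul_one_le_smul_one ((le_iff.2 hPlb).trans hPub))
  have hM : 0 ≤ Hᵀ * R⁻¹ * H := by
    simpa using conjTranspose_mul_mul_le_conjTranspose_mul_mul hR.inv.posSemidef.nonneg H
  calc Lᵀ * Pi * L
      ≤ (p⁻¹ + 2 * (hbar ^ 2 / r) + pbar * (hbar ^ 2 / r) ^ 2) • 1 := by
        rw [hL, hid, hMPM]
        exact sub_two_smul_add_mul_mul_le (hPi ▸ inv_le_inv_smul_one_of_smul_one_le hp hPlb) hM
          (transpose_mul_inv_mul_le_of_opNorm_le hH hr hRlb) hPub hpbar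
    _ = (1 / p + 2 * hbar ^ 2 / r + pbar * hbar ^ 4 / r ^ 2) • 1 := by ring_nf
end

section
/- Let P⁺ = L(J P J^T + G E G^T + Q)L^T + K R K^T with J, L invertible, P, E, Q, R symmetric positive semidefinite. If G E G^T + Q + L^{-1} K R K^T L^{-T} ≥ c·I for some c > 0, and P ≤ p̄ I, ‖J‖ ≤ j̄, then P⁺ ≥ (1 + c/(p̄ j̄²)) · L J P J^T L^T. -/
open Matrix
open scoped MatrixOrder

lemma dotProduct_self_eq_norm_toLp_sq {ι : Type*} [Fintype ι] (x : ι → ℝ) :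
    x ⬝ᵥ x = ‖WithLp.toLp 2 x‖ ^ 2 := by
  rw [← real_inner_self_eq_norm_sq, EuclideanSpace.inner_toLp_toLp, star_trivial]

open scoped Matrix.Norms.L2Operator in
lemma mul_transpose_le_opNorm_sq_smul_one {m k : ℕ} (A : Matrix (Fin m) (Fin k) ℝ) :
    A * Aᵀ ≤ opNorm A ^ 2 • (1 : Matrix (Fin m) (Fin m) ℝ) := by
  have hnorm : opNorm A = ‖Aᵀ‖ := by
    rw [← conjTranspose_eq_transpose_of_trivial, l2_opNorm_conjTranspose]; rfl
  refine PosSemidef.of_dotProduct_mulVec_nonneg ?_ fun x => ?_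
  · simp [IsHermitian, conjTranspose_eq_transpose_of_trivial, transpose_sub, transpose_mul]
  · have h := pow_le_pow_left₀ (norm_nonneg _) (l2_opNorm_mulVec Aᵀ (WithLp.toLp 2 x)) 2
    simp only [star_trivial, sub_mulVec, smul_mulVec, one_mulVec, dotProduct_sub, dotProduct_smul,
      smul_eq_mul, ← mulVec_mulVec, dotProduct_mulVec x A, ← mulVec_transpose, sub_nonneg]
    rw [dotProduct_self_eq_norm_toLp_sq, dotProduct_self_eq_norm_toLp_sq, hnorm]
    simpa [mul_pow] using h

section Congruence

variable {ι : Type*} [Fintype ι]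

lemma mul_mul_transpose_le_mul_mul_transpose {A B : Matrix ι ι ℝ} (h : A ≤ B) (C : Matrix ι ι ℝ) :
    C * A * Cᵀ ≤ C * B * Cᵀ :=
  star_right_conjugate_le_conjugate h C

lemma mul_mul_transpose_nonneg {A : Matrix ι ι ℝ} (h : 0 ≤ A) (C : Matrix ι ι ℝ) :
    0 ≤ C * A * Cᵀ := by
  simpa using mul_mul_transpose_le_mul_mul_transpose h C

lemma conj_nonsing_inv_cancel [DecidableEq ι] {L : Matrix ι ι ℝ} (hL : IsUnit L.det)
    (A : Matrix ι ι ℝ) : L * (L⁻¹ * A * L⁻¹ᵀ) * Lᵀ = A := by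
  rw [transpose_nonsing_inv, Matrix.mul_assoc L⁻¹, mul_nonsing_inv_cancel_left _ _ hL,
    nonsing_inv_mul_cancel_right _ _ (by rwa [det_transpose])]

end Congruence

lemma mul_mul_transpose_le_smul_one {n : ℕ} {P : Matrix (Fin n) (Fin n) ℝ} {p j : ℝ}
    (hp : 0 ≤ p) (hP : P ≤ p • 1) (J : Matrix (Fin n) (Fin n) ℝ) (hJ : opNorm J ≤ j) :
    J * P * Jᵀ ≤ (p * j ^ 2) • (1 : Matrix (Fin n) (Fin n) ℝ) := by
  have hJ2 : opNorm J ^ 2 ≤ j ^ 2 := pow_le_pow_left₀ (norm_nonneg _) hJ 2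
  calc J * P * Jᵀ ≤ J * (p • 1) * Jᵀ := mul_mul_transpose_le_mul_mul_transpose hP J
    _ = p • (J * Jᵀ) := by simp
    _ ≤ p • (opNorm J ^ 2 • 1) :=
        smul_le_smul_of_nonneg_left (mul_transpose_le_opNorm_sq_smul_one J) hp
    _ ≤ p • (j ^ 2 • 1) :=
        smul_le_smul_of_nonneg_left (smul_le_smul_of_nonneg_right hJ2 zero_le_one) hp
    _ = (p * j ^ 2) • 1 := smul_smul _ _ _

lemma div_smul_mul_mul_transpose_le {n : ℕ} {P J S : Matrix (Fin n) (Fin n) ℝ} {p j c : ℝ}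
    (hc : 0 ≤ c) (hP₀ : 0 ≤ P) (hP : P ≤ p • 1) (hJ : opNorm J ≤ j) (hS : c • 1 ≤ S) :
    (c / (p * j ^ 2)) • (J * P * Jᵀ) ≤ S := by
  have hX : 0 ≤ J * P * Jᵀ := mul_mul_transpose_nonneg hP₀ J
  -- for `p j² ≤ 0` the coefficient `c / (p j²)` is `≤ 0` (it is `0` when `p j² = 0`)
  rcases le_or_gt (p * j ^ 2) 0 with hs | hs
  · calc (c / (p * j ^ 2)) • (J * P * Jᵀ) ≤ 0 :=
          smul_nonpos_of_nonpos_of_nonneg (div_nonpos_of_nonneg_of_nonpos hc hs) hX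
      _ ≤ c • 1 := smul_nonneg hc zero_le_one
      _ ≤ S := hS
  · have hp : 0 ≤ p := (pos_of_mul_pos_left hs (sq_nonneg j)).le
    calc (c / (p * j ^ 2)) • (J * P * Jᵀ) ≤ (c / (p * j ^ 2)) • ((p * j ^ 2) • 1) :=
          smul_le_smul_of_nonneg_left (mul_mul_transpose_le_smul_one hp hP J hJ) (by positivity)
      _ = c • 1 := by rw [smul_smul, div_mul_cancel₀ _ hs.ne']
      _ ≤ S := hS

theorem posterior_covariance_lower_bound_general
    (n d m : ℕ)
    (P J L Q : Matrix (Fin n) (Fin n) ℝ)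
    (G : Matrix (Fin n) (Fin d) ℝ) (E : Matrix (Fin d) (Fin d) ℝ)
    (K : Matrix (Fin n) (Fin m) ℝ) (R : Matrix (Fin m) (Fin m) ℝ)
    (pbar jbar c : ℝ)
    (hL : IsUnit L.det)
    (hP : P.PosDef)
    (hPub : (pbar • (1 : Matrix (Fin n) (Fin n) ℝ) - P).PosSemidef)
    (hJn : opNorm J ≤ jbar)
    (hc : 0 < c)
    (hcl : (G * E * G.transpose + Q
            + L⁻¹ * K * R * K.transpose * (L⁻¹).transpose
            - c • (1 : Matrix (Fin n) (Fin n) ℝ)).PosSemidef)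
    (Pplus : Matrix (Fin n) (Fin n) ℝ)
    (hPplus : Pplus = L * (J * P * J.transpose + G * E * G.transpose + Q)
        * L.transpose + K * R * K.transpose) :
    (Pplus - (1 + c / (pbar * jbar ^ 2)) •
        (L * J * P * J.transpose * L.transpose)).PosSemidef := by
  have hPplus' : Pplus = L * (J * P * Jᵀ) * Lᵀ
      + L * (G * E * Gᵀ + Q + L⁻¹ * K * R * Kᵀ * L⁻¹ᵀ) * Lᵀ := by
    rw [hPplus, ← conj_nonsing_inv_cancel hL (K * R * Kᵀ)]
    simp only [Matrix.mul_add, Matrix.add_mul, Matrix.mul_assoc, add_assoc]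
  have key := mul_mul_transpose_le_mul_mul_transpose (div_smul_mul_mul_transpose_le hc.le
    hP.posSemidef.nonneg (le_iff.mpr hPub) hJn (le_iff.mpr hcl)) L
  refine le_iff.mp ?_
  calc (1 + c / (pbar * jbar ^ 2)) • (L * J * P * Jᵀ * Lᵀ)
      = L * (J * P * Jᵀ) * Lᵀ + L * ((c / (pbar * jbar ^ 2)) • (J * P * Jᵀ)) * Lᵀ := by
        simp only [add_smul, one_smul, Matrix.mul_smul, Matrix.smul_mul, Matrix.mul_assoc]
    _ ≤ _ := add_le_add le_rfl key
    _ = Pplus := hPplus'.symm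

/-- Let `P⁺ = L (J P Jᵀ + G E Gᵀ + Q) Lᵀ + K R Kᵀ` with `J, L` invertible and
`P, E, Q, R` positive (semi)definite.  If
`G E Gᵀ + Q + L⁻¹ K R Kᵀ L⁻ᵀ ≥ c I` for some `c > 0`, `P ≤ p̄ I` and `‖J‖ ≤ j̄`,
then `P⁺ ≥ (1 + c/(p̄ j̄²)) L J P Jᵀ Lᵀ`. -/
theorem posterior_covariance_lower_bound
    (n d m : ℕ)
    (P J L Q : Matrix (Fin n) (Fin n) ℝ)
    (G : Matrix (Fin n) (Fin d) ℝ) (E : Matrix (Fin d) (Fin d) ℝ)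
    (K : Matrix (Fin n) (Fin m) ℝ) (R : Matrix (Fin m) (Fin m) ℝ)
    (pbar jbar c : ℝ)
    (hJ : IsUnit J.det) (hL : IsUnit L.det)
    (hP : P.PosDef)
    (hPub : (pbar • (1 : Matrix (Fin n) (Fin n) ℝ) - P).PosSemidef)
    (hJn : opNorm J ≤ jbar)
    (hE : E.PosSemidef) (hQ : Q.PosSemidef) (hR : R.PosSemidef)
    (hc : 0 < c)
    (hcl : (G * E * G.transpose + Q
            + L⁻¹ * K * R * K.transpose * (L⁻¹).transpose
            - c • (1 : Matrix (Fin n) (Fin n) ℝ)).PosSemidef)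
    (Pplus : Matrix (Fin n) (Fin n) ℝ)
    (hPplus : Pplus = L * (J * P * J.transpose + G * E * G.transpose + Q)
        * L.transpose + K * R * K.transpose) :
    (Pplus - (1 + c / (pbar * jbar ^ 2)) •
        (L * J * P * J.transpose * L.transpose)).PosSemidef :=
  posterior_covariance_lower_bound_general n d m P J L Q G E K R pbar jbar c hL hP hPub hJn hc hcl
    Pplus hPplus
end
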